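/- Let S(v) be an antichain of nodes in a finite rooted tree of depth ≤ L with reachability probabilities π, let P_norm = Σ_{h ∈ S(v)} π(h) > 0, and let 𝒮 be the distribution on S(v) with Pr[h] = π(h)/P_norm. Order S(v) = {h_1, h_2, ...} so that π(h_1) ≥ π(h_2) ≥ .... Then for every ε ∈ (0,1), taking z = ⌈(1-ε)·e^{H(𝒮)/ε}⌉, we have Σ_{i=1}^{z} π(h_i) ≥ (1-ε)·P_norm, where H(𝒮) is the entropy of 𝒮. -/

import Mathlib

open Finset
open scoped Classical

/-- The children of node `h` in the tree `T` (histories are lists of actions). -/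
noncomputable def children (T : Finset (List ℕ)) (h : List ℕ) : Finset (List ℕ) :=
  T.filter (fun h' => ∃ a : ℕ, h' = h ++ [a])

/-- A finite rooted tree `T` (a prefix-closed finite set of histories containing
the root `[]`) together with reachability probabilities `π`: `π(root) = 1` and
for every internal node the children's probabilities sum to the parent's. -/
structure TreeProb (T : Finset (List ℕ)) (π : List ℕ → ℝ) : Prop where
  root_mem : [] ∈ T
  prefix_closed : ∀ h ∈ T, ∀ h' : List ℕ, h' <+: h → h' ∈ T
  nonneg : ∀ h ∈ T, 0 ≤ π h
  le_one : ∀ h ∈ T, π h ≤ 1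
  root_one : π [] = 1
  internal_sum : ∀ h ∈ T, (children T h).Nonempty → π h = ∑ h' ∈ children T h, π h'

/-!
If the terms beyond the first `z` had total mass `t > ε`, each of them would be at most the
average `(1 - t) / z` of the first `z` terms, so they alone would contribute at least
`t * log (z / (1 - t)) > ε * log (z / (1 - ε)) ≥ H` to the entropy `H`; the last inequality is
the choice of `z`.
-/

namespace Real

lemma mul_log_inv_le_negMulLog {x c : ℝ} (hx : 0 ≤ x) (hxc : x ≤ c) :
    x * log c⁻¹ ≤ negMulLog x := by
  rcases hx.eq_or_lt with rfl | hx
  · simp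
  have : log x ≤ log c := log_le_log hx hxc
  rw [negMulLog, log_inv]
  nlinarith

lemma sum_mul_log_inv_le_sum_negMulLog {ι : Type*} (s : Finset ι) {q : ι → ℝ} {c : ℝ}
    (hq : ∀ i ∈ s, 0 ≤ q i) (hqc : ∀ i ∈ s, q i ≤ c) :
    (∑ i ∈ s, q i) * log c⁻¹ ≤ ∑ i ∈ s, negMulLog (q i) := by
  rw [sum_mul]
  exact sum_le_sum fun i hi => mul_log_inv_le_negMulLog (hq i hi) (hqc i hi)

end Real

lemma Antitone.natCast_mul_le_sum_filter_val_lt {m z : ℕ} {q : Fin m → ℝ} (hq : Antitone q)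
    {i : Fin m} (hi : z ≤ i) : z * q i ≤ ∑ j : Fin m with j.val < z, q j := by
  have hcard : #{j : Fin m | j.val < z} = z := by
    rw [Fin.card_filter_val_lt]; omega
  have hle : ∀ j ∈ ({j : Fin m | j.val < z} : Finset (Fin m)), q i ≤ q j := fun j hj =>
    hq (Fin.le_def.2 ((mem_filter.1 hj).2.le.trans hi))
  simpa only [hcard, nsmul_eq_mul] using card_nsmul_le_sum _ q (q i) hle

section

open Real

theorem one_sub_le_sum_val_lt_ceil_exp_entropy {m : ℕ} {q : Fin m → ℝ}
    (hq0 : ∀ i, 0 ≤ q i) (hq : Antitone q) (hsum : ∑ i, q i = 1) {ε : ℝ} (hε0 : 0 < ε)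
    (hε1 : ε < 1) :
    1 - ε ≤ ∑ i : Fin m with i.val < ⌈(1 - ε) * exp ((∑ j, negMulLog (q j)) / ε)⌉₊, q i := by
  set H := ∑ j, negMulLog (q j)
  set z := ⌈(1 - ε) * exp (H / ε)⌉₊
  set t := ∑ i : Fin m with ¬ i.val < z, q i
  have hsplit : (∑ i : Fin m with i.val < z, q i) + t = 1 := by
    rw [sum_filter_add_sum_filter_not, hsum]
  by_contra! hlt
  have hεt : ε < t := by linarith
  have hq1 : ∀ i, q i ≤ 1 := fun i => hsum ▸ single_le_sum (fun j _ => hq0 j) (mem_univ i)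
  have hH : 0 ≤ H := sum_nonneg fun j _ => negMulLog_nonneg (hq0 j) (hq1 j)
  have hz : (0 : ℝ) < z := by
    exact_mod_cast Nat.ceil_pos.2 (mul_pos (by linarith) (exp_pos _))
  have htail : ∀ i ∈ ({i | ¬ i.val < z} : Finset (Fin m)), q i ≤ (1 - t) / z := by
    intro i hi
    rw [le_div_iff₀ hz, mul_comm]
    have := hq.natCast_mul_le_sum_filter_val_lt (not_lt.1 (mem_filter.1 hi).2)
    linarith
  obtain ⟨i, hi, hqi⟩ := exists_lt_of_sum_lt
    (show ∑ i : Fin m with ¬ i.val < z, (0 : ℝ) < t by simpa using hε0.trans hεt)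
  have ht1 : 0 < 1 - t := (div_pos_iff_of_pos_right hz).1 (hqi.trans_le (htail i hi))
  have hentropy : t * log (z / (1 - t)) ≤ H :=
    calc t * log (z / (1 - t)) = t * log ((1 - t) / z)⁻¹ := by rw [inv_div]
      _ ≤ ∑ i : Fin m with ¬ i.val < z, negMulLog (q i) :=
        sum_mul_log_inv_le_sum_negMulLog _ (fun i _ => hq0 i) htail
      _ ≤ H := sum_le_sum_of_subset_of_nonneg (subset_univ _)
        fun j _ _ => negMulLog_nonneg (hq0 j) (hq1 j)
  have hceil : H / ε ≤ log (z / (1 - ε)) := by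
    rw [le_log_iff_exp_le (div_pos hz (by linarith)), le_div_iff₀ (by linarith), mul_comm]
    exact Nat.le_ceil _
  have hlog : log (z / (1 - ε)) < log (z / (1 - t)) :=
    log_lt_log (div_pos hz (by linarith)) (div_lt_div_of_pos_left hz ht1 (by linarith))
  have hlog_nonneg : 0 ≤ log (z / (1 - ε)) := (div_nonneg hH hε0.le).trans hceil
  exact lt_irrefl H <| calc
    H ≤ ε * log (z / (1 - ε)) := (div_le_iff₀' hε0).1 hceil
    _ < ε * log (z / (1 - t)) := mul_lt_mul_of_pos_left hlog hε0
    _ ≤ t * log (z / (1 - t)) := by gcongr; exact hlog_nonneg.trans hlog.le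
    _ ≤ H := hentropy

end

theorem antichain_entropy_coverage_general (T : Finset (List ℕ)) (π : List ℕ → ℝ)
    (hT : TreeProb T π) (m : ℕ) (hist : Fin m → List ℕ) (hmem : ∀ i, hist i ∈ T)
    (hsorted : Antitone (fun i => π (hist i)))
    (hP : 0 < ∑ i, π (hist i))
    (ε : ℝ) (hε : ε ∈ Set.Ioo (0 : ℝ) 1) :
    (1 - ε) * (∑ i, π (hist i)) ≤
      ∑ i ∈ Finset.univ.filter (fun i : Fin m =>
        (i : ℕ) <
          ⌈(1 - ε) * Real.exp
            ((∑ j, Real.negMulLog (π (hist j) / (∑ i, π (hist i)))) / ε)⌉₊),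
        π (hist i) := by
  set P := ∑ i, π (hist i)
  have hcover := one_sub_le_sum_val_lt_ceil_exp_entropy (q := fun i => π (hist i) / P)
    (fun i => div_nonneg (hT.nonneg _ (hmem i)) hP.le)
    (fun _ _ hij => div_le_div_of_nonneg_right (hsorted hij) hP.le)
    (by rw [← sum_div, div_self hP.ne']) hε.1 hε.2
  rwa [← sum_div, le_div_iff₀ hP] at hcover

/-- Combinatorial core of the randomness vs. precomputation trade-off: for an
antichain `hist 0, hist 1, ...` ordered by decreasing reach probability, the
`z = ⌈(1-ε)·e^{H(𝒮)/ε}⌉` most likely elements carry a `(1-ε)` fraction of the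
total reach probability `P_norm`, where `𝒮` is the normalized distribution. -/
theorem antichain_entropy_coverage (T : Finset (List ℕ)) (π : List ℕ → ℝ)
    (hT : TreeProb T π) (L : ℕ) (hdepth : ∀ h ∈ T, h.length ≤ L)
    (m : ℕ) (hist : Fin m → List ℕ) (hinj : Function.Injective hist)
    (hmem : ∀ i, hist i ∈ T)
    (hanti : ∀ i j, i ≠ j → ¬ hist i <+: hist j)
    (hsorted : Antitone (fun i => π (hist i)))
    (hP : 0 < ∑ i, π (hist i))
    (ε : ℝ) (hε : ε ∈ Set.Ioo (0 : ℝ) 1) :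
    (1 - ε) * (∑ i, π (hist i)) ≤
      ∑ i ∈ Finset.univ.filter (fun i : Fin m =>
        (i : ℕ) <
          ⌈(1 - ε) * Real.exp
            ((∑ j, Real.negMulLog (π (hist j) / (∑ i, π (hist i)))) / ε)⌉₊),
        π (hist i) :=
  antichain_entropy_coverage_general T π hT m hist hmem hsorted hP ε hε
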